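/- arXiv:math/0404065 — 3 statements merged into one kernel-verified Lean document; each statement's English description precedes it below -/
import Mathlib

section
/- For all positive integers n and all x in a commutative ring (or field of rational functions in q), the Newton interpolation identity holds: sum_{i=1}^n [n choose i]_q * (-1)^{i-1} * (x+1)(x+q)...(x+q^{i-1}) / (1-q^i) * q^i = sum_{i=1}^n (-1)^{i-1} (x^i - (-1)^i) q^i / (1-q^i). -/
open Finset

variable {F : Type*} [Field F]

/-- `(q;q)_n = (1-q)(1-q^2)...(1-q^n)` -/
def qfac (q : F) (n : ℕ) : F := ∏ j ∈ Finset.range n, (1 - q ^ (j + 1))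

/-- `(z;q)_k = (1-z)(1-zq)...(1-zq^{k-1})` -/
def qpoch (z q : F) (k : ℕ) : F := ∏ j ∈ Finset.range k, (1 - z * q ^ j)

/-- Gaussian binomial coefficient `[n choose k]_q` -/
def qbinom (q : F) (n k : ℕ) : F := qfac q n / (qfac q k * qfac q (n - k))

/-- Sum over weakly increasing `m`-tuples `lo ≤ i_1 ≤ ... ≤ i_m ≤ n` of
`∏_j q^{i_j}/(1-q^{i_j})` (equal to `1` when `m = 0`). -/
def chainSum (q : F) (lo n m : ℕ) : F :=
  ∑ c ∈ Finset.univ.filter (fun c : Fin m → Fin (n + 1) =>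
      (∀ j k : Fin m, j ≤ k → c j ≤ c k) ∧ ∀ j, lo ≤ (c j : ℕ)),
    ∏ j, q ^ (c j : ℕ) / (1 - q ^ (c j : ℕ))

/-- Complete homogeneous symmetric function `h_m` of the variables
`x lo, x (lo+1), ..., x n`. -/
def hSum {R : Type*} [CommRing R] (x : ℕ → R) (lo n m : ℕ) : R :=
  ∑ c ∈ Finset.univ.filter (fun c : Fin m → Fin (n + 1) =>
      (∀ j k : Fin m, j ≤ k → c j ≤ c k) ∧ ∀ j, lo ≤ (c j : ℕ)),
    ∏ j, x (c j : ℕ)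

/-! Both sides vanish at `n = 0`, and from `n` to `n + 1` the right side gains
`(1 - (-x) ^ (n + 1)) q ^ (n + 1) / (1 - q ^ (n + 1))`. On the left, the relation
`[n, i] (1 - q ^ (n + 1)) = [n + 1, i] (1 - q ^ (n + 1 - i))` makes the increment of the `i`-th
term `[n + 1, i] (-1) ^ (i + 1) (x + 1) ⋯ (x + q ^ (i - 1)) q ^ (n + 1) / (1 - q ^ (n + 1))`, and
these increments add up to the same amount by the `q`-Newton expansion
`x ^ N = ∑ [N, i] (x - 1) (x - q) ⋯ (x - q ^ (i - 1))` taken at `-x`. The expansion is proved for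
Gaussian binomials defined by the `q`-Pascal recurrence, which agree with `qbinom` when no `q ^ i`
with `1 ≤ i ≤ N` equals `1`. -/

def gaussBinom {R : Type*} [CommRing R] (q : R) : ℕ → ℕ → R
  | _, 0 => 1
  | 0, _ + 1 => 0
  | n + 1, k + 1 => gaussBinom q n k + q ^ (k + 1) * gaussBinom q n (k + 1)

section CommRing

variable {R : Type*} [CommRing R] (q : R)

@[simp] lemma gaussBinom_zero_right (n : ℕ) : gaussBinom q n 0 = 1 := by cases n <;> rfl

lemma gaussBinom_succ_succ (n k : ℕ) :
    gaussBinom q (n + 1) (k + 1) = gaussBinom q n k + q ^ (k + 1) * gaussBinom q n (k + 1) := rfl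

lemma gaussBinom_eq_zero_of_lt {n k : ℕ} (h : n < k) : gaussBinom q n k = 0 := by
  induction n generalizing k with
  | zero => obtain ⟨k, rfl⟩ := Nat.exists_eq_add_one_of_ne_zero h.ne'; rfl
  | succ n ih =>
    obtain ⟨k, rfl⟩ := Nat.exists_eq_add_one_of_ne_zero (by omega : k ≠ 0)
    rw [gaussBinom_succ_succ, ih (by omega), ih (by omega), mul_zero, add_zero]

theorem sum_gaussBinom_mul_prod_sub_pow (x : R) (n : ℕ) :
    ∑ i ∈ range (n + 1), gaussBinom q n i * ∏ j ∈ range i, (x - q ^ j) = x ^ n := by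
  induction n with
  | zero => simp
  | succ n ih =>
    set P : ℕ → R := fun i => ∏ j ∈ range i, (x - q ^ j) with hP
    have hshift : ∑ k ∈ range (n + 1), q ^ (k + 1) * gaussBinom q n (k + 1) * P (k + 1) + 1
        = ∑ k ∈ range (n + 1), q ^ k * gaussBinom q n k * P k := by
      have h := sum_range_succ' (fun i => q ^ i * gaussBinom q n i * P i) (n + 1)
      rw [sum_range_succ, gaussBinom_eq_zero_of_lt q (lt_add_one n)] at h
      simpa [hP] using h.symm
    calc ∑ i ∈ range (n + 2), gaussBinom q (n + 1) i * P i
        = ∑ k ∈ range (n + 1), gaussBinom q n k * P (k + 1)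
            + (∑ k ∈ range (n + 1), q ^ (k + 1) * gaussBinom q n (k + 1) * P (k + 1) + 1) := by
          rw [sum_range_succ', ← add_assoc, ← sum_add_distrib]
          simp only [gaussBinom_succ_succ, gaussBinom_zero_right, hP, range_zero, prod_empty,
            mul_one]
          exact congrArg (· + 1) (sum_congr rfl fun k _ => by ring)
      _ = ∑ k ∈ range (n + 1), gaussBinom q n k * P k * x := by
          rw [hshift, ← sum_add_distrib]
          refine sum_congr rfl fun k _ => ?_
          simp only [hP, prod_range_succ]; ring
      _ = x ^ (n + 1) := by rw [← sum_mul, ih, pow_succ]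

end CommRing

section Field

variable (q : F)

lemma qfac_succ (n : ℕ) : qfac q (n + 1) = qfac q n * (1 - q ^ (n + 1)) := prod_range_succ _ _

lemma qfac_ne_zero {m n : ℕ} (hq : ∀ i ∈ Icc 1 n, q ^ i ≠ 1) (hm : m ≤ n) : qfac q m ≠ 0 :=
  prod_ne_zero_iff.2 fun j hj =>
    sub_ne_zero.2 (hq (j + 1) (mem_Icc.2 ⟨j.succ_pos, (mem_range.1 hj).trans_le hm⟩)).symm

lemma gaussBinom_mul_qfac_mul_qfac {n k : ℕ} (hk : k ≤ n) :
    gaussBinom q n k * (qfac q k * qfac q (n - k)) = qfac q n := by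
  induction n generalizing k with
  | zero =>
    obtain rfl : k = 0 := by omega
    simp [qfac]
  | succ n ih =>
    rcases k with _ | k
    · simp [qfac]
    have hlow := ih (k := k) (by omega)
    rw [gaussBinom_succ_succ, Nat.add_sub_add_right, qfac_succ q k, qfac_succ q n]
    rcases (by omega : k = n ∨ k < n) with rfl | hlt
    · rw [gaussBinom_eq_zero_of_lt q (lt_add_one k)]
      linear_combination (1 - q ^ (k + 1)) * hlow
    · obtain ⟨m, rfl⟩ := Nat.exists_eq_add_of_lt hlt
      have hup := ih (k := k + 1) (by omega)
      rw [show k + m + 1 - (k + 1) = m by omega, qfac_succ q k] at hup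
      rw [show k + m + 1 - k = m + 1 by omega, qfac_succ q m] at hlow ⊢
      linear_combination (1 - q ^ (k + 1)) * hlow + q ^ (k + 1) * (1 - q ^ (m + 1)) * hup

lemma qbinom_eq_gaussBinom {n k : ℕ} (hq : ∀ i ∈ Icc 1 n, q ^ i ≠ 1) (hk : k ≤ n) :
    qbinom q n k = gaussBinom q n k := by
  rw [qbinom, div_eq_iff (mul_ne_zero (qfac_ne_zero q hq hk) (qfac_ne_zero q hq (by omega))),
    gaussBinom_mul_qfac_mul_qfac q hk]

lemma qbinom_mul_one_sub_pow_succ {n k : ℕ} (hq : ∀ i ∈ Icc 1 (n + 1), q ^ i ≠ 1) (hk : k ≤ n) :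
    qbinom q n k * (1 - q ^ (n + 1)) = qbinom q (n + 1) k * (1 - q ^ (n + 1 - k)) := by
  have hqk := qfac_ne_zero q hq (m := k) (by omega)
  have hqnk := qfac_ne_zero q hq (m := n - k) (by omega)
  have hnk1 : 1 - q ^ (n - k + 1) ≠ 0 := sub_ne_zero.2 (hq _ (mem_Icc.2 ⟨by omega, by omega⟩)).symm
  simp only [qbinom, Nat.sub_add_comm hk, qfac_succ]
  field_simp

theorem sum_Icc_qbinom_mul_prod_add (x : F) {n : ℕ} (hq : ∀ i ∈ Icc 1 n, q ^ i ≠ 1) :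
    ∑ i ∈ Icc 1 n, qbinom q n i * ((-1) ^ (i + 1) * ∏ j ∈ range i, (x + q ^ j)) = 1 - (-x) ^ n := by
  have h := sum_gaussBinom_mul_prod_sub_pow q (-x) n
  rw [range_eq_Ico, sum_eq_sum_Ico_succ_bot (by omega : 0 < n + 1), zero_add,
    Ico_add_one_right_eq_Icc] at h
  simp only [gaussBinom_zero_right, range_zero, prod_empty, mul_one] at h
  rw [← h, sub_add_cancel_left, ← sum_neg_distrib]
  refine sum_congr rfl fun i hi => ?_
  have hprod : ∏ j ∈ range i, (-x - q ^ j) = (-1) ^ i * ∏ j ∈ range i, (x + q ^ j) := by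
    simp only [← neg_add', prod_neg, card_range]
  rw [qbinom_eq_gaussBinom q hq (mem_Icc.1 hi).2, hprod]
  ring

lemma sum_Icc_qbinom_succ_eq_add (x : F) (n : ℕ) (hq : ∀ i ∈ Icc 1 (n + 1), q ^ i ≠ 1) :
    ∑ i ∈ Icc 1 (n + 1),
        qbinom q (n + 1) i * ((-1) ^ (i + 1) * ∏ j ∈ range i, (x + q ^ j)) / (1 - q ^ i) * q ^ i
      = ∑ i ∈ Icc 1 n,
          qbinom q n i * ((-1) ^ (i + 1) * ∏ j ∈ range i, (x + q ^ j)) / (1 - q ^ i) * q ^ i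
        + (1 - (-x) ^ (n + 1)) * q ^ (n + 1) / (1 - q ^ (n + 1)) := by
  set g : ℕ → F := fun i => (-1) ^ (i + 1) * ∏ j ∈ range i, (x + q ^ j)
  have hne : ∀ i ∈ Icc 1 (n + 1), 1 - q ^ i ≠ 0 := fun i hi => sub_ne_zero.2 (hq i hi).symm
  have hterm : ∀ i ∈ Icc 1 n, qbinom q (n + 1) i * g i / (1 - q ^ i) * q ^ i
      = qbinom q n i * g i / (1 - q ^ i) * q ^ i
        + qbinom q (n + 1) i * g i * q ^ (n + 1) / (1 - q ^ (n + 1)) := by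
    intro i hi
    obtain ⟨hi1, hin⟩ := mem_Icc.1 hi
    have hratio := qbinom_mul_one_sub_pow_succ q hq hin
    have hpow : q ^ (n + 1 - i) * q ^ i = q ^ (n + 1) := pow_sub_mul_pow q (by omega)
    have ha := hne i (mem_Icc.2 ⟨hi1, by omega⟩)
    have hb := hne (n + 1) (mem_Icc.2 ⟨by omega, le_rfl⟩)
    field_simp
    linear_combination (-(q ^ i * g i)) * hratio + qbinom q (n + 1) i * g i * hpow
  rw [sum_Icc_succ_top (by omega), sum_congr rfl hterm, sum_add_distrib,
    ← sum_Icc_qbinom_mul_prod_add q x hq, sum_Icc_succ_top (by omega), add_mul, add_div, sum_mul,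
    sum_div]
  ring

end Field

theorem fu_lascoux_eq1_m1_general (q x : F) (n : ℕ)
    (hq : ∀ i ∈ Finset.Icc 1 n, q ^ i ≠ 1) :
    ∑ i ∈ Finset.Icc 1 n,
        qbinom q n i * ((-1) ^ (i + 1) * ∏ j ∈ Finset.range i, (x + q ^ j)) / (1 - q ^ i) * q ^ i
      = ∑ i ∈ Finset.Icc 1 n, (-1) ^ (i + 1) * (x ^ i - (-1) ^ i) * q ^ i / (1 - q ^ i) := by
  induction n with
  | zero => simp
  | succ n ih =>
    have hsign : (-1 : F) ^ (n + 1 + 1) * (x ^ (n + 1) - (-1) ^ (n + 1)) = 1 - (-x) ^ (n + 1) := by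
      have : (-1 : F) ^ (n + 1) * (-1) ^ (n + 1) = 1 := by rw [← mul_pow]; norm_num
      rw [neg_pow]
      linear_combination this
    rw [sum_Icc_qbinom_succ_eq_add q x n hq,
      ih fun i hi => hq i (Icc_subset_Icc_right (by omega) hi), sum_Icc_succ_top (by omega), hsign]

theorem fu_lascoux_eq1_m1 (q x : F) (n : ℕ) (hn : 1 ≤ n)
    (hq : ∀ i ∈ Finset.Icc 1 n, q ^ i ≠ 1) :
    ∑ i ∈ Finset.Icc 1 n,
        qbinom q n i * ((-1) ^ (i + 1) * ∏ j ∈ Finset.range i, (x + q ^ j)) / (1 - q ^ i) * q ^ i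
      = ∑ i ∈ Finset.Icc 1 n, (-1) ^ (i + 1) * (x ^ i - (-1) ^ i) * q ^ i / (1 - q ^ i) :=
  fu_lascoux_eq1_m1_general q x n hq
end

section
/- For all positive integers m, n: sum_{i=1}^n [n choose i]_q * (-1)^{i-1} * (x+1)(x+q)...(x+q^{i-1}) * q^{mi} / (1-q^i)^m = sum_{i=1}^n (-1)^{i-1} (x^i - (-1)^i) q^i / (1-q^i) * sum over chains i <= i_2 <= ... <= i_m <= n of q^{i_2+...+i_m} / ((1-q^{i_2})...(1-q^{i_m})). -/
open Finset

variable {F : Type*} [Field F]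

namespace FL
lemma qfac_succ (q : F) (k : ℕ) : qfac q (k + 1) = qfac q k * (1 - q ^ (k + 1)) := by
  simp [qfac, Finset.prod_range_succ]
section
variable {q : F} {n : ℕ} (hq : ∀ i ∈ Finset.Icc 1 n, q ^ i ≠ 1)
include hq
lemma one_sub_ne {i : ℕ} (h1 : 1 ≤ i) (h2 : i ≤ n) : 1 - q ^ i ≠ 0 := by
  have := hq i (Finset.mem_Icc.mpr ⟨h1, h2⟩)
  exact sub_ne_zero.mpr (Ne.symm this)
lemma qfac_ne_zero {k : ℕ} (hk : k ≤ n) : qfac q k ≠ 0 := by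
  unfold qfac
  rw [Finset.prod_ne_zero_iff]
  intro j hj
  rw [Finset.mem_range] at hj
  exact one_sub_ne hq (by omega) (by omega)

lemma pascal1 {j : ℕ} (h2 : j + 1 ≤ n) :
    qbinom q (n + 1) (j + 1) = q ^ (j + 1) * qbinom q n (j + 1) + qbinom q n j := by
  obtain ⟨d, rfl⟩ : ∃ d, n = j + 1 + d := ⟨n - j - 1, by omega⟩
  have ha : qfac q j ≠ 0 := qfac_ne_zero hq (by omega)
  have hb : qfac q d ≠ 0 := qfac_ne_zero hq (by omega)
  have h1 : (1 : F) - q ^ (j + 1) ≠ 0 := one_sub_ne hq (by omega) (by omega)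
  have h2' : (1 : F) - q ^ (d + 1) ≠ 0 := one_sub_ne hq (by omega) (by omega)
  unfold qbinom
  simp only [show j + 1 + d + 1 - (j + 1) = d + 1 from by omega,
    show j + 1 + d - (j + 1) = d from by omega,
    show j + 1 + d - j = d + 1 from by omega]
  rw [qfac_succ q (j + 1 + d), qfac_succ q j, qfac_succ q d]
  rw [show q ^ (j + 1 + d + 1) = q ^ (j + 1) * q ^ (d + 1) from by
    rw [← pow_add]; ring_nf]
  field_simp
  ring

lemma pascal2 {j : ℕ} (h2 : j + 1 ≤ n) :
    qbinom q (n + 1) (j + 1) = qbinom q n (j + 1) + q ^ (n - j) * qbinom q n j := by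
  obtain ⟨d, rfl⟩ : ∃ d, n = j + 1 + d := ⟨n - j - 1, by omega⟩
  have ha : qfac q j ≠ 0 := qfac_ne_zero hq (by omega)
  have hb : qfac q d ≠ 0 := qfac_ne_zero hq (by omega)
  have h1 : (1 : F) - q ^ (j + 1) ≠ 0 := one_sub_ne hq (by omega) (by omega)
  have h2' : (1 : F) - q ^ (d + 1) ≠ 0 := one_sub_ne hq (by omega) (by omega)
  unfold qbinom
  simp only [show j + 1 + d + 1 - (j + 1) = d + 1 from by omega,
    show j + 1 + d - (j + 1) = d from by omega,
    show j + 1 + d - j = d + 1 from by omega]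
  rw [qfac_succ q (j + 1 + d), qfac_succ q j, qfac_succ q d]
  rw [show q ^ (j + 1 + d + 1) = q ^ (j + 1) * q ^ (d + 1) from by
    rw [← pow_add]; ring_nf]
  field_simp
  ring

lemma qbinom_shift' {k : ℕ} (hq1 : ∀ i ∈ Finset.Icc 1 (n+1), q ^ i ≠ 1) (hk : k ≤ n) :
    qbinom q (n + 1) (k + 1) * (1 - q ^ (k + 1)) = qbinom q n k * (1 - q ^ (n + 1)) := by
  have hkf : qfac q k ≠ 0 := qfac_ne_zero hq (by omega)
  have hb : qfac q (n - k) ≠ 0 := qfac_ne_zero hq (by omega)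
  have h1 : (1 : F) - q ^ (k + 1) ≠ 0 := by
    have := hq1 (k+1) (Finset.mem_Icc.mpr ⟨by omega, by omega⟩)
    exact sub_ne_zero.mpr (Ne.symm this)
  have e1 : n + 1 - (k + 1) = n - k := by omega
  unfold qbinom
  rw [e1, qfac_succ q n, qfac_succ q k]
  field_simp

lemma qbinom_ratio {i : ℕ} (h1 : 1 ≤ i) (h2 : i ≤ n) :
    qbinom q (n + 1) i * (1 - q ^ (n + 1 - i)) = qbinom q n i * (1 - q ^ (n + 1)) := by
  have hif : qfac q i ≠ 0 := qfac_ne_zero hq (by omega)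
  have hb : qfac q (n - i) ≠ 0 := qfac_ne_zero hq (by omega)
  have hns : (1 : F) - q ^ (n + 1 - i) ≠ 0 := one_sub_ne hq (by omega) (by omega)
  have e3 : n + 1 - i = (n - i) + 1 := by omega
  unfold qbinom
  rw [e3, qfac_succ q n, qfac_succ q (n - i), ← e3]
  field_simp
end
section
variable {q : F} {n : ℕ}

lemma qbinom_zero (hq : ∀ i ∈ Finset.Icc 1 n, q ^ i ≠ 1) : qbinom q n 0 = 1 := by
  have h := qfac_ne_zero hq le_rfl
  simp [qbinom, qfac]
  exact h

lemma qbinom_self (hq : ∀ i ∈ Finset.Icc 1 n, q ^ i ≠ 1) : qbinom q n n = 1 := by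
  have h := qfac_ne_zero hq le_rfl
  simp [qbinom, qfac]
  exact h

lemma sum_Icc_one (f : ℕ → F) (n : ℕ) :
    ∑ i ∈ Finset.Icc 1 n, f i = ∑ k ∈ Finset.range n, f (k + 1) := by
  rw [← Finset.Ico_add_one_right_eq_Icc, Finset.sum_Ico_eq_sum_range]
  exact Finset.sum_congr (by norm_num) fun k _ => by rw [add_comm]

lemma alt_sum (x : F) : ∀ {N : ℕ}, (∀ i ∈ Finset.Icc 1 N, q ^ i ≠ 1) →
    ∑ l ∈ Finset.range (N + 1),
        qbinom q N l * (-1 : F) ^ l * ∏ j ∈ Finset.range l, (x + q ^ j) = (-x) ^ N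
  | 0, hq => by simp [qbinom, qfac]
  | (N+1), hq => by
    have hq' : ∀ i ∈ Finset.Icc 1 N, q ^ i ≠ 1 := fun i hi => by
      simp only [Finset.mem_Icc] at hi ⊢
      exact hq i (Finset.mem_Icc.mpr ⟨hi.1, by omega⟩)
    have IH := alt_sum x hq'
    set P : ℕ → F := fun l => ∏ j ∈ Finset.range l, (x + q ^ j) with hP
    set f : ℕ → F := fun l => qbinom q (N+1) l * (-1 : F) ^ l * P l with hf
    set g : ℕ → F := fun l => q ^ l * qbinom q N l * ((-1 : F) ^ l * P l) with hg
    set w : ℕ → F := fun l => qbinom q N l * ((-1 : F) ^ (l+1) * P (l+1)) with hw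
    have h0 : ∑ l ∈ Finset.range (N + 1 + 1), f l
        = ((∑ l ∈ Finset.range N, f (l + 1)) + f (N + 1)) + f 0 := by
      rw [Finset.sum_range_succ' f (N+1), Finset.sum_range_succ]
    have h1 : ∀ l ∈ Finset.range N, f (l + 1) = g (l + 1) + w l := by
      intro l hl
      rw [Finset.mem_range] at hl
      simp only [hf, hg, hw]
      rw [pascal1 hq' (by omega)]
      ring
    have h2 : ∑ l ∈ Finset.range (N + 1), g l = (∑ l ∈ Finset.range N, g (l + 1)) + g 0 :=
      Finset.sum_range_succ' g N
    have h3 : ∑ l ∈ Finset.range (N + 1), w l = (∑ l ∈ Finset.range N, w l) + w N :=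
      Finset.sum_range_succ w N
    have h4 : ∑ l ∈ Finset.range (N + 1), (g l + w l) = (-x) * ((-x) ^ N) := by
      rw [← IH, Finset.mul_sum]
      apply Finset.sum_congr rfl
      intro l hl
      simp only [hg, hw, hP]
      rw [Finset.prod_range_succ]
      ring
    rw [Finset.sum_add_distrib] at h4
    have h5 : ∑ l ∈ Finset.range N, f (l + 1)
        = (∑ l ∈ Finset.range N, g (l + 1)) + (∑ l ∈ Finset.range N, w l) := by
      rw [← Finset.sum_add_distrib]
      exact Finset.sum_congr rfl h1
    have hf0 : f 0 = 1 := by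
      simp only [hf, hP]
      simp [qbinom_zero hq]
    have hg0 : g 0 = 1 := by
      simp only [hg, hP]
      simp [qbinom_zero hq']
    have hfN : f (N + 1) = (-1 : F) ^ (N + 1) * P (N + 1) := by
      simp only [hf]
      rw [qbinom_self hq]
      ring
    have hwN : w N = (-1 : F) ^ (N + 1) * P (N + 1) := by
      simp only [hw]
      rw [qbinom_self hq']
      ring
    rw [h0, h5, hf0, hfN]
    rw [hwN] at h3
    have : (-x : F) ^ (N + 1) = (-x) * (-x) ^ N := by ring
    rw [this]
    linear_combination h4 - h2 - h3 - hg0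


def Pp (q x : F) (l : ℕ) : F := ∏ j ∈ Finset.range l, (x + q ^ j)

def yy (q : F) (i : ℕ) : F := q ^ i / (1 - q ^ i)

lemma alt_sum' (q x : F) {N : ℕ} (hq : ∀ i ∈ Finset.Icc 1 N, q ^ i ≠ 1) :
    ∑ l ∈ Finset.range (N + 1), qbinom q N l * (-1 : F) ^ l * Pp q x l = (-x) ^ N := by
  simp only [Pp]
  exact alt_sum x hq

lemma base_id (q x : F) : ∀ {n : ℕ}, (∀ i ∈ Finset.Icc 1 n, q ^ i ≠ 1) →
    ∑ i ∈ Finset.Icc 1 n, qbinom q n i * ((-1 : F) ^ (i + 1) * Pp q x i) * yy q i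
      = ∑ i ∈ Finset.Icc 1 n, (-1 : F) ^ (i + 1) * (x ^ i - (-1 : F) ^ i) * yy q i
  | 0, hq => by simp
  | (n + 1), hq => by
    have hq' : ∀ i ∈ Finset.Icc 1 n, q ^ i ≠ 1 := fun i hi => by
      rw [Finset.mem_Icc] at hi
      exact hq i (Finset.mem_Icc.mpr ⟨hi.1, by omega⟩)
    have IH := base_id q x hq'
    simp only [sum_Icc_one] at IH ⊢
    rw [Finset.sum_range_succ, Finset.sum_range_succ]
    have h1 : ∀ k ∈ Finset.range n,
        qbinom q (n + 1) (k + 1) * ((-1 : F) ^ (k + 1 + 1) * Pp q x (k + 1)) * yy q (k + 1)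
          = qbinom q n (k + 1) * ((-1 : F) ^ (k + 1 + 1) * Pp q x (k + 1)) * yy q (k + 1)
            + q ^ (n - k) * qbinom q n k * ((-1 : F) ^ (k + 1 + 1) * Pp q x (k + 1)) * yy q (k + 1) := by
      intro k hk
      rw [Finset.mem_range] at hk
      rw [pascal2 hq' (by omega)]
      ring
    have hsplit : ∑ k ∈ Finset.range n,
        qbinom q (n + 1) (k + 1) * ((-1 : F) ^ (k + 1 + 1) * Pp q x (k + 1)) * yy q (k + 1)
        = (∑ k ∈ Finset.range n,
            qbinom q n (k + 1) * ((-1 : F) ^ (k + 1 + 1) * Pp q x (k + 1)) * yy q (k + 1))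
          + ∑ k ∈ Finset.range n,
              q ^ (n - k) * qbinom q n k * ((-1 : F) ^ (k + 1 + 1) * Pp q x (k + 1)) * yy q (k + 1) := by
      rw [← Finset.sum_add_distrib]
      exact Finset.sum_congr rfl h1
    have key : ∀ k ∈ Finset.range (n + 1),
        q ^ (n - k) * qbinom q n k * ((-1 : F) ^ (k + 1 + 1) * Pp q x (k + 1)) * yy q (k + 1)
          = -(q ^ (n + 1) / (1 - q ^ (n + 1)))
              * (qbinom q (n + 1) (k + 1) * (-1 : F) ^ (k + 1) * Pp q x (k + 1)) := by
      intro k hk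
      rw [Finset.mem_range] at hk
      have hS := qbinom_shift' hq' hq (show k ≤ n by omega)
      have hne1 : (1 : F) - q ^ (k + 1) ≠ 0 := one_sub_ne hq (by omega) (by omega)
      have hne2 : (1 : F) - q ^ (n + 1) ≠ 0 := one_sub_ne hq (by omega) (by omega)
      have hdiv : qbinom q n k / (1 - q ^ (k + 1)) = qbinom q (n + 1) (k + 1) / (1 - q ^ (n + 1)) :=
        (div_eq_div_iff hne1 hne2).mpr hS.symm
      have hpow : q ^ (n - k) * q ^ (k + 1) = q ^ (n + 1) := by
        rw [← pow_add]
        congr 1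
        omega
      calc q ^ (n - k) * qbinom q n k * ((-1 : F) ^ (k + 1 + 1) * Pp q x (k + 1)) * yy q (k + 1)
          = (q ^ (n - k) * q ^ (k + 1)) * (qbinom q n k / (1 - q ^ (k + 1)))
              * ((-1 : F) ^ (k + 1 + 1) * Pp q x (k + 1)) := by
            simp only [yy]
            ring
        _ = -(q ^ (n + 1) / (1 - q ^ (n + 1)))
              * (qbinom q (n + 1) (k + 1) * (-1 : F) ^ (k + 1) * Pp q x (k + 1)) := by
            rw [hpow, hdiv]
            ring
    have hE : ∑ l ∈ Finset.range (n + 1 + 1), qbinom q (n + 1) l * (-1 : F) ^ l * Pp q x l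
        = (∑ k ∈ Finset.range (n + 1),
            qbinom q (n + 1) (k + 1) * (-1 : F) ^ (k + 1) * Pp q x (k + 1)) + 1 := by
      rw [Finset.sum_range_succ']
      congr 1
      rw [qbinom_zero hq]
      simp [Pp]
    have hAS := alt_sum' q x hq
    have h2 : ∑ k ∈ Finset.range (n + 1),
        q ^ (n - k) * qbinom q n k * ((-1 : F) ^ (k + 1 + 1) * Pp q x (k + 1)) * yy q (k + 1)
        = (-1 : F) ^ (n + 1 + 1) * (x ^ (n + 1) - (-1 : F) ^ (n + 1)) * yy q (n + 1) := by
      rw [Finset.sum_congr rfl key, ← Finset.mul_sum]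
      have hEsum : ∑ k ∈ Finset.range (n + 1),
          qbinom q (n + 1) (k + 1) * (-1 : F) ^ (k + 1) * Pp q x (k + 1) = (-x) ^ (n + 1) - 1 := by
        rw [hAS] at hE
        linear_combination -hE
      rw [hEsum]
      have e1 : (-1 : F) ^ (n + 1 + 1) = (-1 : F) ^ n := by
        rw [pow_succ, pow_succ]; ring
      have e2 : (-1 : F) ^ (n + 1) = -(-1 : F) ^ n := by
        rw [pow_succ]; ring
      have e3 : (-x : F) ^ (n + 1) = -((-1 : F) ^ n * x ^ (n + 1)) := by
        rw [neg_pow, pow_succ]; ring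
      rw [e1, e2, e3]
      simp only [yy]
      have e4 : ((-1 : F) ^ n) ^ 2 = 1 := by
        rw [← pow_mul, mul_comm, pow_mul]
        norm_num
      linear_combination (-(q ^ (n + 1) * (1 - q ^ (n + 1))⁻¹)) * e4
    have h3 : q ^ (n - n) * qbinom q n n * ((-1 : F) ^ (n + 1 + 1) * Pp q x (n + 1)) * yy q (n + 1)
        = qbinom q (n + 1) (n + 1) * ((-1 : F) ^ (n + 1 + 1) * Pp q x (n + 1)) * yy q (n + 1) := by
      rw [qbinom_self hq', qbinom_self hq, Nat.sub_self]
      ring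
    have hDs : ∑ k ∈ Finset.range (n + 1),
        q ^ (n - k) * qbinom q n k * ((-1 : F) ^ (k + 1 + 1) * Pp q x (k + 1)) * yy q (k + 1)
        = (∑ k ∈ Finset.range n,
            q ^ (n - k) * qbinom q n k * ((-1 : F) ^ (k + 1 + 1) * Pp q x (k + 1)) * yy q (k + 1))
          + q ^ (n - n) * qbinom q n n * ((-1 : F) ^ (n + 1 + 1) * Pp q x (n + 1)) * yy q (n + 1) :=
      Finset.sum_range_succ _ n
    rw [hsplit]
    linear_combination IH - hDs + h2 - h3

end

lemma chainSum_zero (q : F) (lo n : ℕ) : chainSum q lo n 0 = 1 := by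
  simp [chainSum]

lemma chainSum_succ (q : F) (lo n m : ℕ) :
    chainSum q lo n (m + 1) = ∑ v ∈ Finset.Icc lo n, yy q v * chainSum q v n m := by
  unfold chainSum
  rw [← Finset.sum_fiberwise_of_maps_to
    (g := fun c : Fin (m + 1) → Fin (n + 1) => (c 0 : ℕ)) (t := Finset.Icc lo n)
    (fun c hc => by
      rw [Finset.mem_filter] at hc
      exact Finset.mem_Icc.mpr ⟨hc.2.2 0, Nat.lt_succ_iff.mp (c 0).isLt⟩)]
  apply Finset.sum_congr rfl
  intro v hv
  rw [Finset.mem_Icc] at hv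
  rw [Finset.mul_sum]
  apply Finset.sum_nbij' (i := fun c => Fin.tail c)
    (j := fun c' => Fin.cons (⟨v, by omega⟩ : Fin (n + 1)) c')
  · -- maps to
    intro c hc
    simp only [Finset.mem_filter, Finset.mem_univ, true_and] at hc ⊢
    obtain ⟨⟨hmono, hlo⟩, h0⟩ := hc
    refine ⟨fun j k hjk => hmono j.succ k.succ (by simpa using hjk), fun j => ?_⟩
    have : c 0 ≤ c j.succ := hmono 0 j.succ (Fin.zero_le _)
    calc v = (c 0 : ℕ) := h0.symm
      _ ≤ (c j.succ : ℕ) := this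
  · -- maps back
    intro c' hc'
    simp only [Finset.mem_filter, Finset.mem_univ, true_and] at hc' ⊢
    obtain ⟨hmono, hlo⟩ := hc'
    refine ⟨⟨fun j k hjk => ?_, fun j => ?_⟩, by simp⟩
    · rcases Fin.eq_zero_or_eq_succ j with rfl | ⟨j', rfl⟩
      · rcases Fin.eq_zero_or_eq_succ k with rfl | ⟨k', rfl⟩
        · exact le_refl _
        · simp only [Fin.cons_zero, Fin.cons_succ]
          exact Fin.mk_le_mk.mpr (hlo k')
      · rcases Fin.eq_zero_or_eq_succ k with rfl | ⟨k', rfl⟩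
        · exact absurd hjk (by simp [Fin.le_def])
        · simp only [Fin.cons_succ]
          exact hmono j' k' (by simpa using hjk)
    · rcases Fin.eq_zero_or_eq_succ j with rfl | ⟨j', rfl⟩
      · simpa using hv.1
      · simp only [Fin.cons_succ]
        exact le_trans hv.1 (hlo j')
  · -- left inverse
    intro c hc
    simp only [Finset.mem_filter, Finset.mem_univ, true_and] at hc
    have h0 : c 0 = (⟨v, by omega⟩ : Fin (n + 1)) := Fin.ext hc.2
    rw [← h0]
    exact Fin.cons_self_tail c
  · -- right inverse
    intro c' _
    exact Fin.tail_cons _ _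
  · -- summand
    intro c hc
    simp only [Finset.mem_filter, Finset.mem_univ, true_and] at hc
    rw [Fin.prod_univ_succ]
    congr 1
    · rw [hc.2]
      rfl

lemma star0 (q : F) : ∀ {n : ℕ}, (∀ i ∈ Finset.Icc 1 n, q ^ i ≠ 1) → ∀ {i : ℕ}, 1 ≤ i → i ≤ n →
    ∑ j ∈ Finset.Icc i n, qbinom q j i * yy q j = qbinom q n i * yy q i
  | 0, hq, i, h1, h2 => by omega
  | (n + 1), hq, i, h1, h2 => by
    have hq' : ∀ i ∈ Finset.Icc 1 n, q ^ i ≠ 1 := fun i hi => by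
      rw [Finset.mem_Icc] at hi
      exact hq i (Finset.mem_Icc.mpr ⟨hi.1, by omega⟩)
    rcases Nat.lt_or_ge i (n + 1) with hlt | hge
    · have hin : i ≤ n := by omega
      have IH := star0 q hq' h1 hin
      rw [Finset.sum_Icc_succ_top (by omega : i ≤ n + 1), IH]
      have hratio := qbinom_ratio hq' h1 hin
      have hA : (1 : F) - q ^ i ≠ 0 := one_sub_ne hq (by omega) (by omega)
      have hB : (1 : F) - q ^ (n + 1) ≠ 0 := one_sub_ne hq (by omega) (by omega)
      have hC : (1 : F) - q ^ (n + 1 - i) ≠ 0 := one_sub_ne hq (by omega) (by omega)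
      have hpow : q ^ (n + 1 - i) * q ^ i = q ^ (n + 1) := by
        rw [← pow_add]
        congr 1
        omega
      have key : yy q i - yy q (n + 1)
          = (1 - q ^ (n + 1 - i)) * (q ^ i / ((1 - q ^ i) * (1 - q ^ (n + 1)))) := by
        simp only [yy]
        rw [div_sub_div _ _ hA hB,
          show q ^ i * (1 - q ^ (n + 1)) - (1 - q ^ i) * q ^ (n + 1)
              = (1 - q ^ (n + 1 - i)) * q ^ i from by linear_combination hpow,
          mul_div_assoc]
      have cancel : (1 - q ^ (n + 1)) * (q ^ i / ((1 - q ^ i) * (1 - q ^ (n + 1)))) = yy q i := by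
        simp only [yy]
        field_simp
      linear_combination (-(qbinom q (n + 1) i)) * key
        - (q ^ i / ((1 - q ^ i) * (1 - q ^ (n + 1)))) * hratio - qbinom q n i * cancel
    · have hie : i = n + 1 := by omega
      subst hie
      rw [Finset.Icc_self, Finset.sum_singleton]

lemma star (q : F) {n : ℕ} (hq : ∀ i ∈ Finset.Icc 1 n, q ^ i ≠ 1) :
    ∀ (m : ℕ) {i : ℕ}, 1 ≤ i → i ≤ n →
    ∑ j ∈ Finset.Icc i n, qbinom q j i * yy q j * chainSum q j n m
      = qbinom q n i * yy q i ^ (m + 1) := by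
  intro m
  induction m with
  | zero =>
    intro i h1 h2
    have : ∀ j ∈ Finset.Icc i n, qbinom q j i * yy q j * chainSum q j n 0
        = qbinom q j i * yy q j := by
      intro j _
      rw [chainSum_zero]
      ring
    rw [Finset.sum_congr rfl this, star0 q hq h1 h2, pow_one]
  | succ m IH =>
    intro i h1 h2
    have step1 : ∀ j ∈ Finset.Icc i n, qbinom q j i * yy q j * chainSum q j n (m + 1)
        = ∑ v ∈ Finset.Icc j n, qbinom q j i * yy q j * (yy q v * chainSum q v n m) := by
      intro j _
      rw [chainSum_succ, Finset.mul_sum]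
    rw [Finset.sum_congr rfl step1]
    rw [Finset.sum_comm' (s' := fun v => Finset.Icc i v) (t' := Finset.Icc i n)
      (fun j v => by
        simp only [Finset.mem_Icc]
        omega)]
    have step2 : ∀ v ∈ Finset.Icc i n,
        ∑ j ∈ Finset.Icc i v, qbinom q j i * yy q j * (yy q v * chainSum q v n m)
          = qbinom q v i * yy q i * (yy q v * chainSum q v n m) := by
      intro v hv
      rw [Finset.mem_Icc] at hv
      have hqv : ∀ k ∈ Finset.Icc 1 v, q ^ k ≠ 1 := fun k hk => by
        rw [Finset.mem_Icc] at hk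
        exact hq k (Finset.mem_Icc.mpr ⟨hk.1, by omega⟩)
      rw [← Finset.sum_mul, star0 q hqv h1 hv.1]
    rw [Finset.sum_congr rfl step2]
    have step3 : ∀ v ∈ Finset.Icc i n,
        qbinom q v i * yy q i * (yy q v * chainSum q v n m)
          = yy q i * (qbinom q v i * yy q v * chainSum q v n m) := by
      intro v _
      ring
    rw [Finset.sum_congr rfl step3, ← Finset.mul_sum, IH h1 h2]
    ring

end FL

theorem fu_lascoux_eq1 (q x : F) (m n : ℕ) (hm : 1 ≤ m) (hn : 1 ≤ n)
    (hq : ∀ i ∈ Finset.Icc 1 n, q ^ i ≠ 1) :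
    ∑ i ∈ Finset.Icc 1 n,
        qbinom q n i * ((-1) ^ (i + 1) * ∏ j ∈ Finset.range i, (x + q ^ j)) * q ^ (m * i)
          / (1 - q ^ i) ^ m
      = ∑ i ∈ Finset.Icc 1 n,
          (-1) ^ (i + 1) * (x ^ i - (-1) ^ i) * q ^ i / (1 - q ^ i) * chainSum q i n (m - 1) := by
  classical
  have hstep : ∀ i ∈ Finset.Icc 1 n,
      qbinom q n i * ((-1 : F) ^ (i + 1) * ∏ j ∈ Finset.range i, (x + q ^ j)) * q ^ (m * i)
          / (1 - q ^ i) ^ m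
        = qbinom q n i * ((-1 : F) ^ (i + 1) * FL.Pp q x i) * FL.yy q i ^ m := by
    intro i hi
    simp only [FL.Pp, FL.yy]
    rw [div_pow, show q ^ (m * i) = (q ^ i) ^ m from by rw [← pow_mul, mul_comm],
      mul_div_assoc]
  have hstep2 : ∀ i ∈ Finset.Icc 1 n,
      (-1 : F) ^ (i + 1) * (x ^ i - (-1 : F) ^ i) * q ^ i / (1 - q ^ i) * chainSum q i n (m - 1)
        = ((-1 : F) ^ (i + 1) * (x ^ i - (-1 : F) ^ i) * FL.yy q i) * chainSum q i n (m - 1) := by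
    intro i hi
    simp only [FL.yy]
    rw [mul_div_assoc]
  rw [Finset.sum_congr rfl hstep, Finset.sum_congr rfl hstep2]
  obtain ⟨m', rfl⟩ : ∃ m', m = m' + 1 := ⟨m - 1, by omega⟩
  simp only [Nat.add_sub_cancel]
  cases m' with
  | zero =>
    have hc : ∀ i ∈ Finset.Icc 1 n,
        ((-1 : F) ^ (i + 1) * (x ^ i - (-1 : F) ^ i) * FL.yy q i) * chainSum q i n 0
          = (-1 : F) ^ (i + 1) * (x ^ i - (-1 : F) ^ i) * FL.yy q i := by
      intro i _
      rw [FL.chainSum_zero]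
      ring
    rw [Finset.sum_congr rfl hc]
    simp only [zero_add, pow_one]
    exact FL.base_id q x hq
  | succ m'' =>
    have h1 : ∀ i ∈ Finset.Icc 1 n,
        ((-1 : F) ^ (i + 1) * (x ^ i - (-1 : F) ^ i) * FL.yy q i) * chainSum q i n (m'' + 1)
          = ∑ v ∈ Finset.Icc i n,
              ((-1 : F) ^ (i + 1) * (x ^ i - (-1 : F) ^ i) * FL.yy q i)
                * (FL.yy q v * chainSum q v n m'') := by
      intro i _
      rw [FL.chainSum_succ, Finset.mul_sum]
    rw [Finset.sum_congr rfl h1]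
    rw [Finset.sum_comm' (t' := Finset.Icc 1 n) (s' := fun v => Finset.Icc 1 v)
      (h := fun i v => by simp only [Finset.mem_Icc]; omega)]
    have h2 : ∀ v ∈ Finset.Icc 1 n,
        (∑ i ∈ Finset.Icc 1 v,
            ((-1 : F) ^ (i + 1) * (x ^ i - (-1 : F) ^ i) * FL.yy q i)
              * (FL.yy q v * chainSum q v n m''))
          = ∑ i ∈ Finset.Icc 1 v,
              (qbinom q v i * ((-1 : F) ^ (i + 1) * FL.Pp q x i) * FL.yy q i)
                * (FL.yy q v * chainSum q v n m'') := by
      intro v hv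
      rw [Finset.mem_Icc] at hv
      have hqv : ∀ k ∈ Finset.Icc 1 v, q ^ k ≠ 1 := fun k hk => by
        rw [Finset.mem_Icc] at hk
        exact hq k (Finset.mem_Icc.mpr ⟨hk.1, by omega⟩)
      rw [← Finset.sum_mul, ← FL.base_id q x hqv, Finset.sum_mul]
    rw [Finset.sum_congr rfl h2]
    rw [Finset.sum_comm' (t' := Finset.Icc 1 n) (s' := fun i => Finset.Icc i n)
      (h := fun v i => by simp only [Finset.mem_Icc]; omega)]
    have h3 : ∀ i ∈ Finset.Icc 1 n,
        (∑ v ∈ Finset.Icc i n,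
            (qbinom q v i * ((-1 : F) ^ (i + 1) * FL.Pp q x i) * FL.yy q i)
              * (FL.yy q v * chainSum q v n m''))
          = qbinom q n i * ((-1 : F) ^ (i + 1) * FL.Pp q x i) * FL.yy q i ^ (m'' + 1 + 1) := by
      intro i hi
      rw [Finset.mem_Icc] at hi
      have hre : ∀ v ∈ Finset.Icc i n,
          (qbinom q v i * ((-1 : F) ^ (i + 1) * FL.Pp q x i) * FL.yy q i)
              * (FL.yy q v * chainSum q v n m'')
            = (((-1 : F) ^ (i + 1) * FL.Pp q x i) * FL.yy q i)
                * (qbinom q v i * FL.yy q v * chainSum q v n m'') := by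
        intro v _
        ring
      rw [Finset.sum_congr rfl hre, ← Finset.mul_sum, FL.star q hq m'' hi.1 hi.2]
      ring
    rw [Finset.sum_congr rfl h3]
end

section
/- For 0 < q < 1 (real, or |q|<1 complex): sum_{i=1}^infinity (-1)^{i-1} (-1;q)_i/(q;q)_i * q^i/(1-q^i) = sum_{i=1}^infinity 2 q^{2i-1}/(1-q^{2i-1}), and both equal sum_{i=1}^infinity 2 q^i/(1-q^{2i}). -/
open Finset

variable {F : Type*} [Field F]

namespace CL

open Filter Topology

/-- `(-1;q)_k = ∏_{j<k} (1+q^j)` -/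
noncomputable def Pp (q : ℝ) (k : ℕ) : ℝ := ∏ j ∈ Finset.range k, (1 + q ^ j)

/-- truncated Gaussian binomial: `0` for `k > n`. -/
noncomputable def bb (q : ℝ) (n k : ℕ) : ℝ := if k ≤ n then qbinom q n k else 0

/-- the key finite sum -/
noncomputable def Sn (q : ℝ) (n : ℕ) : ℝ :=
  ∑ k ∈ Finset.range (n+1),
    (-1 : ℝ)^k * Pp q (k+1) * bb q n (k+1) * (q^(k+1) / (1 - q^(k+1)))

variable {q : ℝ}

lemma qfac_succ (n : ℕ) : qfac q (n+1) = qfac q n * (1 - q ^ (n+1)) :=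
  Finset.prod_range_succ _ n

lemma qfac_zero : qfac q 0 = 1 := Finset.prod_range_zero _

lemma Pp_succ (k : ℕ) : Pp q (k+1) = Pp q k * (1 + q ^ k) := Finset.prod_range_succ _ k

lemma Pp_zero : Pp q 0 = 1 := Finset.prod_range_zero _

lemma bb_of_gt {n k : ℕ} (h : n < k) : bb q n k = 0 := by
  rw [bb, if_neg (by omega)]

section

variable (h0 : 0 < q) (h1 : q < 1)
include h0 h1

lemma one_sub_pow_pos (k : ℕ) : 0 < 1 - q ^ (k+1) := by
  have h : q ^ (k+1) < 1 := pow_lt_one₀ h0.le h1 (by omega)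
  linarith

lemma one_sub_ne (k : ℕ) : (1 : ℝ) - q ^ (k+1) ≠ 0 := (one_sub_pow_pos h0 h1 k).ne'

lemma qfac_pos (n : ℕ) : 0 < qfac q n :=
  Finset.prod_pos fun j _ => one_sub_pow_pos h0 h1 j

lemma qfac_ne (n : ℕ) : qfac q n ≠ 0 := (qfac_pos h0 h1 n).ne'

lemma qbinom_zero (n : ℕ) : qbinom q n 0 = 1 := by
  unfold qbinom
  rw [qfac_zero, one_mul, Nat.sub_zero, div_self (qfac_ne h0 h1 n)]

lemma qbinom_self (n : ℕ) : qbinom q n n = 1 := by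
  unfold qbinom
  rw [Nat.sub_self, qfac_zero, mul_one, div_self (qfac_ne h0 h1 n)]

lemma bb_zero (n : ℕ) : bb q n 0 = 1 := by
  rw [bb, if_pos (Nat.zero_le n)]; exact qbinom_zero h0 h1 n

lemma bb_self (n : ℕ) : bb q n n = 1 := by
  rw [bb, if_pos le_rfl]; exact qbinom_self h0 h1 n

lemma pascalA (n k : ℕ) : bb q (n+1) (k+1) = bb q n k + q^(k+1) * bb q n (k+1) := by
  rcases lt_trichotomy k n with hlt | heq | hgt
  · obtain ⟨m, rfl⟩ : ∃ m, n = k + m + 1 := ⟨n - k - 1, by omega⟩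
    rw [bb, if_pos (by omega), bb, if_pos (by omega), bb, if_pos (by omega)]
    unfold qbinom
    rw [show k + m + 1 + 1 - (k+1) = m + 1 by omega, show k + m + 1 - k = m + 1 by omega,
      show k + m + 1 - (k+1) = m by omega]
    rw [qfac_succ (k+m+1), qfac_succ m, qfac_succ k]
    have h2 := qfac_ne h0 h1 k
    have h3 := qfac_ne h0 h1 m
    have h4 := qfac_ne h0 h1 (k+m+1)
    have h5 := one_sub_ne h0 h1 k
    have h6 := one_sub_ne h0 h1 m
    have h7 := one_sub_ne h0 h1 (k+m+1)
    field_simp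
    ring
  · subst heq
    rw [bb_self h0 h1, bb_self h0 h1, bb_of_gt (by omega)]
    ring
  · rw [bb_of_gt (by omega), bb_of_gt (by omega), bb_of_gt (by omega)]
    ring

lemma pascalB (n k : ℕ) : bb q (n+1) (k+1) - bb q n (k+1) = q^(n-k) * bb q n k := by
  rcases lt_trichotomy k n with hlt | heq | hgt
  · obtain ⟨m, rfl⟩ : ∃ m, n = k + m + 1 := ⟨n - k - 1, by omega⟩
    rw [show k + m + 1 - k = m + 1 by omega]
    rw [bb, if_pos (by omega), bb, if_pos (by omega), bb, if_pos (by omega)]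
    unfold qbinom
    rw [show k + m + 1 + 1 - (k+1) = m + 1 by omega, show k + m + 1 - (k+1) = m by omega,
      show k + m + 1 - k = m + 1 by omega]
    rw [qfac_succ (k+m+1), qfac_succ m, qfac_succ k]
    have h2 := qfac_ne h0 h1 k
    have h3 := qfac_ne h0 h1 m
    have h4 := qfac_ne h0 h1 (k+m+1)
    have h5 := one_sub_ne h0 h1 k
    have h6 := one_sub_ne h0 h1 m
    have h7 := one_sub_ne h0 h1 (k+m+1)
    field_simp
    ring
  · subst heq
    rw [bb_self h0 h1, bb_of_gt (by omega), bb_self h0 h1, Nat.sub_self, pow_zero]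
    ring
  · rw [bb_of_gt (by omega), bb_of_gt (by omega), bb_of_gt (by omega)]
    ring

lemma ratio (n k : ℕ) :
    (1 - q^(n+1)) * bb q n k = (1 - q^(k+1)) * bb q (n+1) (k+1) := by
  rcases le_or_gt k n with hle | hgt
  · obtain ⟨m, rfl⟩ : ∃ m, n = k + m := ⟨n - k, by omega⟩
    rw [bb, if_pos (by omega), bb, if_pos (by omega)]
    unfold qbinom
    rw [show k + m - k = m by omega, show k + m + 1 - (k+1) = m by omega]
    rw [qfac_succ (k+m), qfac_succ k]
    have h2 := qfac_ne h0 h1 k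
    have h3 := qfac_ne h0 h1 m
    have h4 := qfac_ne h0 h1 (k+m)
    have h5 := one_sub_ne h0 h1 k
    have h6 := one_sub_ne h0 h1 (k+m)
    field_simp
  · rw [bb_of_gt hgt, bb_of_gt (by omega)]
    ring

lemma lemE (n : ℕ) :
    ∑ k ∈ Finset.range (n+1), (-1:ℝ)^k * Pp q k * bb q n k = (-1)^n := by
  induction n with
  | zero => simp [Pp_zero, bb_zero h0 h1]
  | succ n ih =>
    rw [Finset.sum_range_succ']
    have h0term : (-1:ℝ)^0 * Pp q 0 * bb q (n+1) 0 = 1 := by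
      simp [Pp_zero, bb_zero h0 h1]
    rw [h0term]
    have hterm : ∀ j ∈ Finset.range (n+1),
        (-1:ℝ)^(j+1) * Pp q (j+1) * bb q (n+1) (j+1)
          = -((-1:ℝ)^j * Pp q j * bb q n j)
            + (((-1:ℝ)^(j+1) * Pp q (j+1) * q^(j+1) * bb q n (j+1))
               - ((-1:ℝ)^j * Pp q j * q^j * bb q n j)) := by
      intro j _
      rw [pascalA h0 h1 n j, Pp_succ]
      ring
    rw [Finset.sum_congr rfl hterm, Finset.sum_add_distrib]
    have htel : ∑ j ∈ Finset.range (n+1),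
        (((-1:ℝ)^(j+1) * Pp q (j+1) * q^(j+1) * bb q n (j+1))
          - ((-1:ℝ)^j * Pp q j * q^j * bb q n j))
        = ((-1:ℝ)^(n+1) * Pp q (n+1) * q^(n+1) * bb q n (n+1))
          - ((-1:ℝ)^0 * Pp q 0 * q^0 * bb q n 0) :=
      Finset.sum_range_sub (fun j => (-1:ℝ)^j * Pp q j * q^j * bb q n j) (n+1)
    rw [htel, Finset.sum_neg_distrib, ih, bb_of_gt (by omega), bb_zero h0 h1, Pp_zero]
    ring

lemma lemA (n : ℕ) :
    ∑ k ∈ Finset.range (n+1), (-1:ℝ)^k * Pp q (k+1) * bb q n k / (1 - q^(k+1))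
      = (1 - (-1:ℝ)^(n+1)) / (1 - q^(n+1)) := by
  rw [eq_div_iff (one_sub_ne h0 h1 n), Finset.sum_mul]
  have hterm : ∀ k ∈ Finset.range (n+1),
      (-1:ℝ)^k * Pp q (k+1) * bb q n k / (1 - q^(k+1)) * (1 - q^(n+1))
        = -((-1:ℝ)^(k+1) * Pp q (k+1) * bb q (n+1) (k+1)) := by
    intro k _
    rw [div_mul_eq_mul_div, div_eq_iff (one_sub_ne h0 h1 k)]
    linear_combination ((-1:ℝ)^k * Pp q (k+1)) * ratio h0 h1 n k
  rw [Finset.sum_congr rfl hterm, Finset.sum_neg_distrib]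
  have hE := lemE h0 h1 (n+1)
  rw [Finset.sum_range_succ'] at hE
  have h0term : (-1:ℝ)^0 * Pp q 0 * bb q (n+1) 0 = 1 := by
    simp [Pp_zero, bb_zero h0 h1]
  rw [h0term] at hE
  linarith

lemma Sn_zero : Sn q 0 = 0 := by
  rw [Sn, Finset.sum_range_one, bb_of_gt (by omega)]
  ring

lemma Sn_rec (n : ℕ) :
    Sn q (n+1) = Sn q n + q^(n+1) * ((1 - (-1:ℝ)^(n+1)) / (1 - q^(n+1))) := by
  have hA := lemA h0 h1 n
  have e1 : Sn q n = ∑ k ∈ Finset.range (n+1+1),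
      (-1:ℝ)^k * Pp q (k+1) * bb q n (k+1) * (q^(k+1) / (1 - q^(k+1))) := by
    rw [Sn, Finset.sum_range_succ
        (fun k => (-1:ℝ)^k * Pp q (k+1) * bb q n (k+1) * (q^(k+1) / (1 - q^(k+1)))) (n+1),
      bb_of_gt (show n < n+1+1 by omega)]
    ring
  have e2 : Sn q (n+1) - Sn q n = ∑ k ∈ Finset.range (n+1+1),
      ((-1:ℝ)^k * Pp q (k+1) * (q^(k+1) / (1 - q^(k+1))))
        * (bb q (n+1) (k+1) - bb q n (k+1)) := by
    rw [Sn, e1, ← Finset.sum_sub_distrib]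
    exact Finset.sum_congr rfl fun k _ => by ring
  have e3 : ∀ k ∈ Finset.range (n+1+1),
      ((-1:ℝ)^k * Pp q (k+1) * (q^(k+1) / (1 - q^(k+1))))
          * (bb q (n+1) (k+1) - bb q n (k+1))
        = q^(n+1) * ((-1:ℝ)^k * Pp q (k+1) * bb q n k / (1 - q^(k+1))) := by
    intro k hk
    rw [pascalB h0 h1 n k]
    rcases le_or_gt k n with hle | hgt
    · have hp : q^(k+1) * q^(n-k) = q^(n+1) := by
        rw [← pow_add]; congr 1; omega
      linear_combination (((-1:ℝ)^k * Pp q (k+1) * bb q n k) / (1 - q^(k+1))) * hp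
    · have hk' : k = n + 1 := by
        have := Finset.mem_range.1 hk; omega
      subst hk'
      rw [bb_of_gt (show n < n+1 by omega)]
      ring
  rw [Finset.sum_congr rfl e3, ← Finset.mul_sum] at e2
  rw [Finset.sum_range_succ
      (fun k => (-1:ℝ)^k * Pp q (k+1) * bb q n k / (1 - q^(k+1))) (n+1),
    bb_of_gt (show n < n+1 by omega)] at e2
  rw [hA] at e2
  have : (-1:ℝ)^(n+1) * Pp q (n+1+1) * 0 / (1 - q^(n+1+1)) = 0 := by ring
  rw [this, add_zero] at e2
  linarith

lemma Sn_even (m : ℕ) :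
    Sn q (2*m) = ∑ i ∈ Finset.range m, 2 * q^(2*i+1) / (1 - q^(2*i+1)) := by
  induction m with
  | zero => simpa using Sn_zero h0 h1
  | succ m ih =>
    rw [show 2*(m+1) = (2*m+1)+1 by omega, Sn_rec h0 h1 (2*m+1),
      show (2*m+1) = (2*m)+1 from rfl, Sn_rec h0 h1 (2*m), ih,
      Finset.sum_range_succ]
    have heven : (-1:ℝ)^(2*m+1+1) = 1 := Even.neg_one_pow ⟨m+1, by ring⟩
    have hodd : (-1:ℝ)^(2*m+1) = -1 := Odd.neg_one_pow ⟨m, by ring⟩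
    rw [heven, hodd]
    ring

end

/-- the summand of the theorem's LHS -/
noncomputable def aSeq (q : ℝ) (i : ℕ) : ℝ :=
  (-1) ^ i * ((∏ j ∈ Finset.range (i + 1), (1 + q ^ j))
      / ∏ j ∈ Finset.range (i + 1), (1 - q ^ (j + 1)))
    * (q ^ (i + 1) / (1 - q ^ (i + 1)))

lemma aSeq_eq (i : ℕ) :
    aSeq q i = (-1)^i * (Pp q (i+1) / qfac q (i+1)) * (q^(i+1) / (1 - q^(i+1))) := rfl

/-- uniform bound constant -/
noncomputable def CC (q : ℝ) : ℝ :=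
  Real.exp ((1-q)⁻¹) * Real.exp ((1-q)⁻¹ * (1-q)⁻¹)

lemma CC_pos : 0 < CC q := by
  unfold CC; positivity

section

variable (h0 : 0 < q) (h1 : q < 1)
include h0 h1

lemma geom_partial_le (k : ℕ) : ∑ j ∈ Finset.range k, q^j ≤ (1-q)⁻¹ := by
  have hs : Summable (fun j : ℕ => q^j) := summable_geometric_of_lt_one h0.le h1
  calc ∑ j ∈ Finset.range k, q^j ≤ ∑' j : ℕ, q^j :=
        Summable.sum_le_tsum _ (fun j _ => by positivity) hs
  _ = (1-q)⁻¹ := tsum_geometric_of_lt_one h0.le h1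

lemma Pp_le (k : ℕ) : Pp q k ≤ Real.exp ((1-q)⁻¹) := by
  have h1' : Pp q k ≤ ∏ j ∈ Finset.range k, Real.exp (q^j) := by
    apply Finset.prod_le_prod
    · intro j _; positivity
    · intro j _; have := Real.add_one_le_exp (q^j); linarith
  rw [← Real.exp_sum] at h1'
  exact h1'.trans (Real.exp_le_exp.2 (geom_partial_le h0 h1 k))

lemma exp_le_one_sub (j : ℕ) :
    Real.exp (-(q^(j+1) * (1-q)⁻¹)) ≤ 1 - q^(j+1) := by
  have hx0 : 0 < q^(j+1) := by positivity
  have hxq : q^(j+1) ≤ q := by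
    calc q^(j+1) ≤ q^1 := pow_le_pow_of_le_one h0.le h1.le (by omega)
    _ = q := pow_one q
  have hx1 : 0 < 1 - q^(j+1) := one_sub_pow_pos h0 h1 j
  have hq1 : 0 < 1 - q := by linarith
  have key : (1 - q^(j+1))⁻¹ ≤ Real.exp (q^(j+1) * (1-q)⁻¹) := by
    have e1 : (1 - q^(j+1))⁻¹ = 1 + q^(j+1) * (1 - q^(j+1))⁻¹ := by
      field_simp
      ring
    have e2 : q^(j+1) * (1 - q^(j+1))⁻¹ ≤ q^(j+1) * (1-q)⁻¹ := by
      apply mul_le_mul_of_nonneg_left _ hx0.le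
      exact inv_anti₀ hq1 (by linarith)
    have e3 := Real.add_one_le_exp (q^(j+1) * (1-q)⁻¹)
    linarith
  rw [Real.exp_neg]
  have h4 := inv_anti₀ (by positivity) key
  rwa [inv_inv] at h4

lemma qfac_ge (k : ℕ) : Real.exp (-((1-q)⁻¹ * (1-q)⁻¹)) ≤ qfac q k := by
  have step1 : ∏ j ∈ Finset.range k, Real.exp (-(q^(j+1) * (1-q)⁻¹)) ≤ qfac q k := by
    unfold qfac
    apply Finset.prod_le_prod
    · intro j _; positivity
    · intro j _; exact exp_le_one_sub h0 h1 j
  rw [← Real.exp_sum] at step1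
  refine le_trans (Real.exp_le_exp.2 ?_) step1
  have hsum : ∑ j ∈ Finset.range k, q^(j+1) ≤ (1-q)⁻¹ := by
    calc ∑ j ∈ Finset.range k, q^(j+1) ≤ ∑ j ∈ Finset.range k, q^j :=
          Finset.sum_le_sum fun j _ => pow_le_pow_of_le_one h0.le h1.le (by omega)
    _ ≤ (1-q)⁻¹ := geom_partial_le h0 h1 k
  have e : ∑ j ∈ Finset.range k, -(q^(j+1) * (1-q)⁻¹)
      = -((∑ j ∈ Finset.range k, q^(j+1)) * (1-q)⁻¹) := by
    rw [Finset.sum_mul, ← Finset.sum_neg_distrib]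
  rw [e]
  have hq1 : (0:ℝ) < 1 - q := by linarith
  have hinv : (0:ℝ) < (1-q)⁻¹ := by positivity
  nlinarith

lemma ratio_le (k : ℕ) : Pp q k / qfac q k ≤ CC q := by
  have hP := Pp_le h0 h1 k
  have hQ := qfac_ge h0 h1 k
  calc Pp q k / qfac q k
      ≤ Real.exp ((1-q)⁻¹) / Real.exp (-((1-q)⁻¹ * (1-q)⁻¹)) :=
        div_le_div₀ (Real.exp_pos _).le hP (Real.exp_pos _) hQ
  _ = CC q := by rw [Real.exp_neg, div_eq_mul_inv, inv_inv]; rfl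

lemma core_abs_le (k : ℕ) :
    |(-1:ℝ)^k * (Pp q (k+1) / qfac q (k+1)) * (q^(k+1) / (1 - q^(k+1)))|
      ≤ CC q * (1-q)⁻¹ * q^(k+1) := by
  have hx1 : 0 < 1 - q^(k+1) := one_sub_pow_pos h0 h1 k
  have hq1 : 0 < 1 - q := by linarith
  have hPp : 0 ≤ Pp q (k+1) := by
    unfold Pp; apply Finset.prod_nonneg; intro j _; positivity
  have hqf := qfac_pos h0 h1 (k+1)
  have hb : 0 ≤ Pp q (k+1) / qfac q (k+1) * (q^(k+1) / (1 - q^(k+1))) := by positivity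
  have habs : |(-1:ℝ)^k * (Pp q (k+1) / qfac q (k+1)) * (q^(k+1) / (1 - q^(k+1)))|
      = Pp q (k+1) / qfac q (k+1) * (q^(k+1) / (1 - q^(k+1))) := by
    rw [mul_assoc, abs_mul, abs_pow, abs_neg, abs_one, one_pow, one_mul,
      abs_of_nonneg hb]
  rw [habs]
  have h2 : q^(k+1) / (1 - q^(k+1)) ≤ q^(k+1) * (1-q)⁻¹ := by
    rw [div_eq_mul_inv]
    apply mul_le_mul_of_nonneg_left _ (by positivity)
    apply inv_anti₀ hq1
    have : q^(k+1) ≤ q := by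
      calc q^(k+1) ≤ q^1 := pow_le_pow_of_le_one h0.le h1.le (by omega)
      _ = q := pow_one q
    linarith
  calc Pp q (k+1) / qfac q (k+1) * (q^(k+1) / (1 - q^(k+1)))
      ≤ CC q * (q^(k+1) * (1-q)⁻¹) := by
        apply mul_le_mul (ratio_le h0 h1 (k+1)) h2 (by positivity) CC_pos.le
  _ = CC q * (1-q)⁻¹ * q^(k+1) := by ring

lemma aSeq_abs_le (i : ℕ) : |aSeq q i| ≤ CC q * (1-q)⁻¹ * q^(i+1) := by
  rw [aSeq_eq]
  exact core_abs_le h0 h1 i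

lemma summable_aSeq : Summable (aSeq q) := by
  apply Summable.of_abs
  refine Summable.of_nonneg_of_le (fun i => abs_nonneg _) (fun i => aSeq_abs_le h0 h1 i) ?_
  exact ((summable_geometric_of_lt_one h0.le h1).mul_left (CC q * (1-q)⁻¹ * q)).congr
    (fun i => by ring)

lemma window_ge (l : ℕ) : ∀ c : ℕ,
    1 - (c:ℝ) * q^(l+1) ≤ ∏ j ∈ Finset.range c, (1 - q^(l+1+j)) := by
  intro c
  induction c with
  | zero => simp
  | succ c ih =>
    rw [Finset.prod_range_succ]
    have hf : 0 < 1 - q^(l+1+c) := by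
      have := one_sub_pow_pos h0 h1 (l+c)
      have he : l + c + 1 = l + 1 + c := by omega
      rwa [he] at this
    have hnn : ∀ j ∈ Finset.range c, (0:ℝ) ≤ 1 - q^(l+1+j) := by
      intro j _
      have := one_sub_pow_pos h0 h1 (l+j)
      have he : l + j + 1 = l + 1 + j := by omega
      rw [he] at this
      linarith
    have hle1 : ∀ j ∈ Finset.range c, (1:ℝ) - q^(l+1+j) ≤ 1 := by
      intro j _
      have : (0:ℝ) < q^(l+1+j) := by positivity
      linarith
    have hprod_le_one : ∏ j ∈ Finset.range c, (1 - q^(l+1+j)) ≤ 1 :=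
      Finset.prod_le_one hnn hle1
    have hprod_nonneg : 0 ≤ ∏ j ∈ Finset.range c, (1 - q^(l+1+j)) :=
      Finset.prod_nonneg hnn
    have hterm : q^(l+1+c) ≤ q^(l+1) := pow_le_pow_of_le_one h0.le h1.le (by omega)
    have hterm0 : (0:ℝ) ≤ q^(l+1+c) := by positivity
    have hq1 : (0:ℝ) ≤ q^(l+1) := by positivity
    push_cast
    nlinarith [mul_nonneg (sub_nonneg.2 hprod_le_one) hterm0]

lemma term_diff_le (n k : ℕ) (hk : k ≤ n) :
    |(-1:ℝ)^k * Pp q (k+1) * bb q n (k+1) * (q^(k+1) / (1 - q^(k+1))) - aSeq q k|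
      ≤ CC q * (1-q)⁻¹ * ((k:ℝ)+1) * q^(n+1) := by
  have hCpos : 0 < CC q * (1-q)⁻¹ := by
    have : (0:ℝ) < 1 - q := by linarith
    have := CC_pos (q := q)
    positivity
  rcases eq_or_lt_of_le hk with rfl | hlt
  · -- k = n : the bb term vanishes
    rw [bb_of_gt (show k < k+1 by omega)]
    have h2 : |(-1:ℝ)^k * Pp q (k+1) * 0 * (q^(k+1) / (1 - q^(k+1))) - aSeq q k|
        = |aSeq q k| := by
      rw [show (-1:ℝ)^k * Pp q (k+1) * 0 * (q^(k+1) / (1 - q^(k+1))) - aSeq q k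
          = -(aSeq q k) by ring, abs_neg]
    rw [h2]
    have h3 := aSeq_abs_le h0 h1 k
    have h4 : (1:ℝ) ≤ (k:ℝ) + 1 := by
      have : (0:ℝ) ≤ (k:ℝ) := Nat.cast_nonneg k
      linarith
    nlinarith [mul_nonneg (mul_nonneg hCpos.le (sub_nonneg.2 h4)) (pow_nonneg h0.le (k+1))]
  · -- k < n
    obtain ⟨m, rfl⟩ : ∃ m, n = k + m + 1 := ⟨n - k - 1, by omega⟩
    have hqfm := qfac_ne h0 h1 m
    have hqfk := qfac_ne h0 h1 (k+1)
    have hw : qfac q (k+m+1) = qfac q m * ∏ j ∈ Finset.range (k+1), (1 - q^(m+1+j)) := by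
      have h5 := Finset.prod_range_add (fun j => 1 - q^(j+1)) m (k+1)
      have h6 : qfac q (k+m+1) = ∏ x ∈ Finset.range (m + (k+1)), (1 - q^(x+1)) := by
        unfold qfac; rw [show k+m+1 = m+(k+1) by omega]
      rw [h6, h5]
      unfold qfac
      congr 1
      exact Finset.prod_congr rfl fun x _ => by rw [show m + x + 1 = m + 1 + x by omega]
    set w := ∏ j ∈ Finset.range (k+1), (1 - q^(m+1+j)) with hwdef
    have hbb : bb q (k+m+1) (k+1) = w / qfac q (k+1) := by
      rw [bb, if_pos (by omega)]
      unfold qbinom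
      rw [show k+m+1 - (k+1) = m by omega, hw]
      field_simp
    have hdiff : (-1:ℝ)^k * Pp q (k+1) * bb q (k+m+1) (k+1) * (q^(k+1) / (1 - q^(k+1)))
        - aSeq q k
        = (-1:ℝ)^k * (Pp q (k+1) / qfac q (k+1)) * (q^(k+1) / (1 - q^(k+1))) * (w - 1) := by
      rw [hbb, aSeq_eq]
      ring
    rw [hdiff, abs_mul]
    have hwle1 : w ≤ 1 := by
      apply Finset.prod_le_one
      · intro j _
        have := one_sub_pow_pos h0 h1 (m+j)
        have he : m + j + 1 = m + 1 + j := by omega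
        rw [he] at this; linarith
      · intro j _
        have : (0:ℝ) < q^(m+1+j) := by positivity
        linarith
    have hwge : 1 - ((k:ℝ)+1) * q^(m+1) ≤ w := by
      have := window_ge h0 h1 m (k+1)
      push_cast at this
      exact this
    have habs2 : |w - 1| ≤ ((k:ℝ)+1) * q^(m+1) := by
      rw [abs_sub_comm, abs_of_nonneg (by linarith)]
      linarith
    have habs1 := core_abs_le h0 h1 k
    have hpow : q^(k+1) * q^(m+1) = q^(k+m+1+1) := by
      rw [← pow_add]; congr 1; omega
    calc |(-1:ℝ)^k * (Pp q (k+1) / qfac q (k+1)) * (q^(k+1) / (1 - q^(k+1)))| * |w - 1|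
        ≤ (CC q * (1-q)⁻¹ * q^(k+1)) * (((k:ℝ)+1) * q^(m+1)) := by
          apply mul_le_mul habs1 habs2 (abs_nonneg _) (by positivity)
    _ = CC q * (1-q)⁻¹ * ((k:ℝ)+1) * (q^(k+1) * q^(m+1)) := by ring
    _ = CC q * (1-q)⁻¹ * ((k:ℝ)+1) * q^(k+m+1+1) := by rw [hpow]

lemma tendsto_Sn : Tendsto (fun n => Sn q n) atTop (𝓝 (∑' i, aSeq q i)) := by
  have hsum := summable_aSeq h0 h1
  have hpartial : Tendsto (fun n => ∑ i ∈ Finset.range (n+1), aSeq q i) atTop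
      (𝓝 (∑' i, aSeq q i)) :=
    (hsum.hasSum.tendsto_sum_nat).comp (tendsto_add_atTop_nat 1)
  have hq1 : (0:ℝ) < 1 - q := by linarith
  have hdiff : Tendsto (fun n => Sn q n - ∑ i ∈ Finset.range (n+1), aSeq q i) atTop (𝓝 0) := by
    refine squeeze_zero_norm
      (f := fun n => Sn q n - ∑ i ∈ Finset.range (n+1), aSeq q i)
      (a := fun n => CC q * (1-q)⁻¹ * (((n:ℝ)+1)^2 * q^(n+1))) ?_ ?_
    · intro n
      show |Sn q n - ∑ i ∈ Finset.range (n+1), aSeq q i|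
          ≤ CC q * (1-q)⁻¹ * (((n:ℝ)+1)^2 * q^(n+1))
      have e0 : Sn q n - ∑ i ∈ Finset.range (n+1), aSeq q i
          = ∑ k ∈ Finset.range (n+1),
              ((-1:ℝ)^k * Pp q (k+1) * bb q n (k+1) * (q^(k+1) / (1 - q^(k+1))) - aSeq q k) := by
        rw [Sn, Finset.sum_sub_distrib]
      rw [e0]
      calc |∑ k ∈ Finset.range (n+1),
              ((-1:ℝ)^k * Pp q (k+1) * bb q n (k+1) * (q^(k+1) / (1 - q^(k+1))) - aSeq q k)|
          ≤ ∑ k ∈ Finset.range (n+1),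
              |(-1:ℝ)^k * Pp q (k+1) * bb q n (k+1) * (q^(k+1) / (1 - q^(k+1))) - aSeq q k| :=
            Finset.abs_sum_le_sum_abs _ _
      _ ≤ ∑ k ∈ Finset.range (n+1), CC q * (1-q)⁻¹ * (((n:ℝ))+1) * q^(n+1) := by
            apply Finset.sum_le_sum
            intro k hk
            have hkn : k ≤ n := by have := Finset.mem_range.1 hk; omega
            refine (term_diff_le h0 h1 n k hkn).trans ?_
            have hcast : (k:ℝ) + 1 ≤ (n:ℝ) + 1 := by
              have : (k:ℝ) ≤ (n:ℝ) := by exact_mod_cast hkn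
              linarith
            have hC : (0:ℝ) ≤ CC q * (1-q)⁻¹ :=
              mul_nonneg CC_pos.le (inv_nonneg.2 hq1.le)
            have hp : (0:ℝ) ≤ q^(n+1) := by positivity
            nlinarith [mul_nonneg (mul_nonneg hC hp) (sub_nonneg.2 hcast)]
      _ = CC q * (1-q)⁻¹ * (((n:ℝ)+1)^2 * q^(n+1)) := by
            rw [Finset.sum_const, Finset.card_range, nsmul_eq_mul]
            push_cast
            ring
    · have hgeo : Tendsto (fun n : ℕ => ((n:ℝ))^2 * q^n) atTop (𝓝 0) :=
        tendsto_pow_const_mul_const_pow_of_abs_lt_one 2 (by rw [abs_of_nonneg h0.le]; exact h1)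
      have hshift : Tendsto (fun n : ℕ => (((n+1:ℕ):ℝ))^2 * q^(n+1)) atTop (𝓝 0) :=
        hgeo.comp (tendsto_add_atTop_nat 1)
      have heq : (fun n : ℕ => CC q * (1-q)⁻¹ * (((n:ℝ)+1)^2 * q^(n+1)))
          = fun n : ℕ => CC q * (1-q)⁻¹ * ((((n+1:ℕ):ℝ))^2 * q^(n+1)) := by
        funext n; push_cast; ring
      rw [heq]
      simpa using hshift.const_mul (CC q * (1-q)⁻¹)
  have hfe : (fun n => Sn q n)
      = fun n => (∑ i ∈ Finset.range (n+1), aSeq q i)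
          + (Sn q n - ∑ i ∈ Finset.range (n+1), aSeq q i) := by
    funext n; ring
  rw [hfe]
  simpa using hpartial.add hdiff

lemma summable_rseq : Summable (fun i : ℕ => 2 * q^(2*i+1) / (1 - q^(2*i+1))) := by
  have hq1 : (0:ℝ) < 1 - q := by linarith
  apply Summable.of_nonneg_of_le
    (fun i => div_nonneg (by positivity) (one_sub_pow_pos h0 h1 (2*i)).le)
    (fun i => ?_)
    ((summable_geometric_of_lt_one (r := q^2) (by positivity) (by nlinarith)).mul_left (2*q*(1-q)⁻¹))
  have hle : q^(2*i+1) ≤ q := by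
    calc q^(2*i+1) ≤ q^1 := pow_le_pow_of_le_one h0.le h1.le (by omega)
    _ = q := pow_one q
  calc 2 * q^(2*i+1) / (1 - q^(2*i+1)) ≤ 2 * q^(2*i+1) * (1-q)⁻¹ := by
        rw [div_eq_mul_inv]
        exact mul_le_mul_of_nonneg_left (inv_anti₀ hq1 (by linarith)) (by positivity)
  _ = 2*q*(1-q)⁻¹ * (q^2)^i := by
        rw [pow_succ, pow_mul]
        ring

lemma key1 : (∑' i, aSeq q i) = ∑' i : ℕ, 2 * q^(2*i+1) / (1 - q^(2*i+1)) := by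
  have hS := tendsto_Sn h0 h1
  have h2m : Tendsto (fun m : ℕ => 2*m) atTop atTop :=
    tendsto_atTop_mono (fun m => (by simp only [id_eq]; omega : id m ≤ 2*m)) tendsto_id
  have hS2 : Tendsto (fun m => Sn q (2*m)) atTop (𝓝 (∑' i, aSeq q i)) := hS.comp h2m
  have hR : Tendsto (fun m => ∑ i ∈ Finset.range m, 2 * q^(2*i+1) / (1 - q^(2*i+1))) atTop
      (𝓝 (∑' i : ℕ, 2 * q^(2*i+1) / (1 - q^(2*i+1)))) :=
    (summable_rseq h0 h1).hasSum.tendsto_sum_nat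
  have hfe : (fun m => ∑ i ∈ Finset.range m, 2 * q^(2*i+1) / (1 - q^(2*i+1)))
      = fun m => Sn q (2*m) := by
    funext m; rw [Sn_even h0 h1 m]
  rw [hfe] at hR
  exact tendsto_nhds_unique hS2 hR

end

end CL

theorem corteel_lovejoy (q : ℝ) (h0 : 0 < q) (h1 : q < 1) :
    (∑' i : ℕ,
        (-1) ^ i * ((∏ j ∈ Finset.range (i + 1), (1 + q ^ j))
            / ∏ j ∈ Finset.range (i + 1), (1 - q ^ (j + 1)))
          * (q ^ (i + 1) / (1 - q ^ (i + 1))))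
        = (∑' i : ℕ, 2 * q ^ (2 * i + 1) / (1 - q ^ (2 * i + 1)))
      ∧ (∑' i : ℕ, 2 * q ^ (2 * i + 1) / (1 - q ^ (2 * i + 1)))
        = ∑' i : ℕ, 2 * q ^ (i + 1) / (1 - q ^ (2 * (i + 1))) := by
  constructor
  · exact CL.key1 h0 h1
  · -- double-counting via ℕ × ℕ
    have hq1 : (0:ℝ) < 1 - q := by linarith
    set f : ℕ × ℕ → ℝ := fun p => 2 * q^((2*p.1+1)*(p.2+1)) with hfdef
    have hfib1 : ∀ i k : ℕ, f (i, k) = (2*q^(2*i+1)) * (q^(2*i+1))^k := by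
      intro i k
      simp only [hfdef]
      rw [show (2*i+1)*(k+1) = (2*i+1) + (2*i+1)*k by ring, pow_add, pow_mul]
      ring
    have hfib2 : ∀ i k : ℕ, f (k, i) = (2*q^(i+1)) * (q^(2*(i+1)))^k := by
      intro i k
      simp only [hfdef]
      rw [show (2*k+1)*(i+1) = (i+1) + (2*(i+1))*k by ring, pow_add, pow_mul]
      ring
    have hgeom : Summable (fun n : ℕ => q^n) := summable_geometric_of_lt_one h0.le h1
    have hfsum : Summable f := by
      apply Summable.of_nonneg_of_le (fun p => by positivity) (fun p => ?_)
        ((hgeom.mul_of_nonneg hgeom (fun n => by positivity)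
          (fun n => by positivity)).mul_left (2*q))
      calc f p ≤ 2 * q^(p.1+p.2+1) := by
            simp only [hfdef]
            have : q^((2*p.1+1)*(p.2+1)) ≤ q^(p.1+p.2+1) :=
              pow_le_pow_of_le_one h0.le h1.le (by nlinarith)
            linarith
      _ = 2*q * (q^p.1 * q^p.2) := by
            rw [pow_add, pow_add, pow_one]
            ring
    have hfibsum1 : ∀ i : ℕ, Summable (fun k => f (i, k)) := by
      intro i
      have hlt : q^(2*i+1) < 1 := pow_lt_one₀ h0.le h1 (by omega)
      exact ((summable_geometric_of_lt_one (by positivity) hlt).mul_left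
        (2*q^(2*i+1))).congr (fun k => (hfib1 i k).symm)
    have hfibsum2 : ∀ i : ℕ, Summable (fun k => f (k, i)) := by
      intro i
      have hlt : q^(2*(i+1)) < 1 := pow_lt_one₀ h0.le h1 (by omega)
      exact ((summable_geometric_of_lt_one (by positivity) hlt).mul_left
        (2*q^(i+1))).congr (fun k => (hfib2 i k).symm)
    have hstep1 : (∑' i : ℕ, 2 * q^(2*i+1) / (1 - q^(2*i+1))) = ∑' p, f p := by
      rw [Summable.tsum_prod' hfsum hfibsum1]
      apply tsum_congr
      intro i
      have hlt : q^(2*i+1) < 1 := pow_lt_one₀ h0.le h1 (by omega)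
      rw [tsum_congr (hfib1 i), tsum_mul_left,
        tsum_geometric_of_lt_one (by positivity) hlt]
      rw [div_eq_mul_inv]
    have hswap : Summable (f ∘ (Equiv.prodComm ℕ ℕ)) :=
      (Equiv.prodComm ℕ ℕ).summable_iff.2 hfsum
    have hswap' : Summable (fun p : ℕ × ℕ => f (p.2, p.1)) :=
      hswap.congr (fun p => rfl)
    have hstep2 : (∑' p, f p) = ∑' i : ℕ, 2 * q^(i+1) / (1 - q^(2*(i+1))) := by
      rw [← (Equiv.prodComm ℕ ℕ).tsum_eq f]
      have hcomp : (∑' p : ℕ × ℕ, f ((Equiv.prodComm ℕ ℕ) p))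
          = ∑' p : ℕ × ℕ, f (p.2, p.1) := tsum_congr (fun p => rfl)
      rw [hcomp, Summable.tsum_prod' hswap' (fun i => hfibsum2 i)]
      apply tsum_congr
      intro i
      have hlt : q^(2*(i+1)) < 1 := pow_lt_one₀ h0.le h1 (by omega)
      rw [tsum_congr (hfib2 i), tsum_mul_left,
        tsum_geometric_of_lt_one (by positivity) hlt]
      rw [div_eq_mul_inv]
    exact hstep1.trans hstep2
end
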